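/- Deterministic form of Theorem 1 (upper bound for the weighted expected loss in multi-task learning): Let H be a nonempty family of bounded measurable K-Lipschitz functions X → ℝ with K > 0, let D^1, …, D^T be Borel probability measures on the metric space X with bounded measurable ground-truth labeling functions f_1, …, f_T : X → ℝ, and write L_j(h) = L_{D^j}(h, f_j) and ξ_{t,i} = inf_{h ∈ H} (L_t(h) + L_i(h)). Let λ ∈ Δ_T, and for each task t let α_t ∈ Δ_T and h_t ∈ H. Suppose that: (i) for each task t there exist a real number Ê_t (the weighted empirical loss) and a slack ε_t ≥ 0 such that Σ_{i=1}^T α_{t,i} L_i(h_t) ≤ Ê_t + ε_t; and (ii) for each pair (t, i) there exist a real number Ŵ_{t,i} (the empirical Wasserstein distance) and a slack γ_{t,i} ≥ 0 such that Ŵ_{t,i} + γ_{t,i} is a dual Wasserstein bound for (D^i, D^t). Then Σ_{t=1}^T λ_t L_t(h_t) ≤ Σ_{t=1}^T λ_t Ê_t + Σ_{t=1}^T λ_t ε_t + 2K Σ_{t=1}^T λ_t Σ_{i=1}^T α_{t,i} (Ŵ_{t,i} + γ_{t,i}) + Σ_{t=1}^T λ_t Σ_{i=1}^T α_{t,i}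 ξ_{t,i}. -/
import Mathlib


open MeasureTheory

/-- Expected loss `L_μ(u, v) = ∫ |u(x) − v(x)| dμ(x)`. -/
noncomputable def expLoss {X : Type*} [MeasurableSpace X] (μ : Measure X)
    (u v : X → ℝ) : ℝ :=
  ∫ x, |u x - v x| ∂μ

/-- A function is bounded if its absolute values are uniformly bounded. -/
def BoundedFun {X : Type*} (g : X → ℝ) : Prop := ∃ C : ℝ, ∀ x, |g x| ≤ C

/-- `g : X → ℝ` is `K`-Lipschitz if `|g(x) − g(y)| ≤ K · d(x, y)` for all `x, y`. -/
def LipschitzCoef {X : Type*} [MetricSpace X] (K : ℝ) (g : X → ℝ) : Prop :=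
  ∀ x y, |g x - g y| ≤ K * dist x y

/-- `W` is a dual Wasserstein bound for `(μ, ν)` if `|∫ f dμ − ∫ f dν| ≤ W`
for every bounded 1-Lipschitz `f : X → ℝ`. -/
def DualWassersteinBound {X : Type*} [MetricSpace X] [MeasurableSpace X]
    (μ ν : Measure X) (W : ℝ) : Prop :=
  ∀ f : X → ℝ, BoundedFun f → LipschitzCoef 1 f →
    |(∫ x, f x ∂μ) - ∫ x, f x ∂ν| ≤ W

private lemma integrable_absdiff {X : Type*} [MeasurableSpace X] (μ : Measure X)
    [IsProbabilityMeasure μ] {u v : X → ℝ} (hu : BoundedFun u) (hmu : Measurable u)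
    (hv : BoundedFun v) (hmv : Measurable v) :
    Integrable (fun x => |u x - v x|) μ := by
  obtain ⟨Cu, hCu⟩ := hu
  obtain ⟨Cv, hCv⟩ := hv
  refine (integrable_const (Cu + Cv)).mono' ((hmu.sub hmv).abs.aestronglyMeasurable)
    (MeasureTheory.ae_of_all _ fun x => ?_)
  simp only [Real.norm_eq_abs, abs_abs]
  exact (abs_sub (u x) (v x)).trans (add_le_add (hCu x) (hCv x))

private lemma expLoss_tri {X : Type*} [MeasurableSpace X] (μ : Measure X)
    [IsProbabilityMeasure μ] {u v w : X → ℝ}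
    (hu : BoundedFun u) (hmu : Measurable u) (hv : BoundedFun v) (hmv : Measurable v)
    (hw : BoundedFun w) (hmw : Measurable w) :
    expLoss μ u v ≤ expLoss μ u w + expLoss μ w v := by
  have h1 := integrable_absdiff μ hu hmu hw hmw
  have h2 := integrable_absdiff μ hw hmw hv hmv
  unfold expLoss
  rw [← integral_add h1 h2]
  exact integral_mono (integrable_absdiff μ hu hmu hv hmv) (h1.add h2)
    fun x => abs_sub_le _ _ _

private lemma expLoss_comm {X : Type*} [MeasurableSpace X] (μ : Measure X)
    (u v : X → ℝ) : expLoss μ u v = expLoss μ v u := by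
  simp only [expLoss, abs_sub_comm]

/-- Deterministic form of Theorem 1 (upper bound for the weighted expected loss
in multi-task learning):
`Σ_t λ_t L_t(h_t) ≤ Σ_t λ_t Ê_t + Σ_t λ_t ε_t
 + 2K Σ_t λ_t Σ_i α_{t,i} (Ŵ_{t,i} + γ_{t,i}) + Σ_t λ_t Σ_i α_{t,i} ξ_{t,i}`,
where `ξ_{t,i} = inf_{g ∈ H} (L_t(g) + L_i(g))`. -/
theorem multitask_upper_bound_deterministic
    {X : Type*} [MetricSpace X] [MeasurableSpace X] [BorelSpace X]
    (K : ℝ) (hK : 0 < K)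
    (H : Set (X → ℝ)) (hHne : H.Nonempty)
    (hHb : ∀ g ∈ H, BoundedFun g)
    (hHm : ∀ g ∈ H, Measurable g)
    (hHl : ∀ g ∈ H, LipschitzCoef K g)
    (T : ℕ)
    (D : Fin T → Measure X) (hD : ∀ j, IsProbabilityMeasure (D j))
    (f : Fin T → X → ℝ)
    (hfb : ∀ j, BoundedFun (f j)) (hfm : ∀ j, Measurable (f j))
    (lam : Fin T → ℝ) (hlam0 : ∀ t, 0 ≤ lam t) (hlam1 : ∑ t, lam t = 1)
    (α : Fin T → Fin T → ℝ) (hα0 : ∀ t i, 0 ≤ α t i) (hα1 : ∀ t, ∑ i, α t i = 1)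
    (h : Fin T → X → ℝ) (hh : ∀ t, h t ∈ H)
    -- (i) weighted empirical losses with slacks
    (Ehat : Fin T → ℝ) (ε : Fin T → ℝ) (hε0 : ∀ t, 0 ≤ ε t)
    (hemp : ∀ t, (∑ i, α t i * expLoss (D i) (h t) (f i)) ≤ Ehat t + ε t)
    -- (ii) empirical Wasserstein distances with slacks
    (What : Fin T → Fin T → ℝ) (γ : Fin T → Fin T → ℝ) (hγ0 : ∀ t i, 0 ≤ γ t i)
    (hW : ∀ t i, DualWassersteinBound (D i) (D t) (What t i + γ t i)) :
    ∑ t, lam t * expLoss (D t) (h t) (f t) ≤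
      (∑ t, lam t * Ehat t) + (∑ t, lam t * ε t)
      + 2 * K * (∑ t, lam t * ∑ i, α t i * (What t i + γ t i))
      + (∑ t, lam t * ∑ i, α t i * (⨅ g : H, (expLoss (D t) (g : X → ℝ) (f t)
            + expLoss (D i) (g : X → ℝ) (f i)))) := by
  haveI : ∀ j, IsProbabilityMeasure (D j) := hD
  haveI : Nonempty ↥H := hHne.to_subtype
  have h2K : (0:ℝ) < 2*K := by linarith
  -- key pairwise inequality
  have key : ∀ t i : Fin T, expLoss (D t) (h t) (f t) ≤
      expLoss (D i) (h t) (f i) + 2*K*(What t i + γ t i)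
      + ⨅ g : H, (expLoss (D t) (g : X → ℝ) (f t) + expLoss (D i) (g : X → ℝ) (f i)) := by
    intro t i
    have hkey : ∀ g : ↥H, expLoss (D t) (h t) (f t) ≤
        expLoss (D i) (h t) (f i) + 2*K*(What t i + γ t i)
        + (expLoss (D t) (g : X → ℝ) (f t) + expLoss (D i) (g : X → ℝ) (f i)) := by
      rintro ⟨g, hg⟩
      simp only
      have hbh := hHb _ (hh t); have hmh := hHm _ (hh t); have hlh := hHl _ (hh t)
      have hbg := hHb _ hg; have hmg := hHm _ hg; have hlg := hHl _ hg
      -- triangle 1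
      have tri1 : expLoss (D t) (h t) (f t) ≤ expLoss (D t) (h t) g + expLoss (D t) g (f t) :=
        expLoss_tri (D t) hbh hmh (hfb t) (hfm t) hbg hmg
      -- triangle 2
      have tri2 : expLoss (D i) (h t) g ≤ expLoss (D i) (h t) (f i) + expLoss (D i) g (f i) := by
        have := expLoss_tri (D i) hbh hmh hbg hmg (hfb i) (hfm i)
        rwa [expLoss_comm (D i) (f i) g] at this
      -- Wasserstein step
      have wass : expLoss (D t) (h t) g ≤ expLoss (D i) (h t) g + 2*K*(What t i + γ t i) := by
        set c : ℝ := (2*K)⁻¹ with hc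
        have hc0 : 0 < c := inv_pos.mpr h2K
        obtain ⟨Ch, hCh⟩ := hbh
        obtain ⟨Cg, hCg⟩ := hbg
        have hbφ : BoundedFun (fun x => |h t x - g x| * c) := by
          refine ⟨(Ch + Cg) * c, fun x => ?_⟩
          rw [abs_mul, abs_abs, abs_of_pos hc0]
          exact mul_le_mul_of_nonneg_right
            ((abs_sub _ _).trans (add_le_add (hCh x) (hCg x))) hc0.le
        have hlφ : LipschitzCoef 1 (fun x => |h t x - g x| * c) := by
          intro x y
          rw [← sub_mul, abs_mul, abs_of_pos hc0]
          have h1 : |(|h t x - g x|) - (|h t y - g y|)| ≤ |h t x - h t y| + |g x - g y| := by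
            refine (abs_abs_sub_abs_le_abs_sub _ _).trans ?_
            have he : (h t x - g x) - (h t y - g y) = (h t x - h t y) - (g x - g y) := by ring
            rw [he]
            exact abs_sub _ _
          have h2 : |h t x - h t y| + |g x - g y| ≤ K * dist x y + K * dist x y :=
            add_le_add (hlh x y) (hlg x y)
          calc |(|h t x - g x|) - (|h t y - g y|)| * c
              ≤ (K * dist x y + K * dist x y) * c :=
                mul_le_mul_of_nonneg_right (h1.trans h2) hc0.le
            _ = 1 * dist x y := by rw [hc]; field_simp; ring
        have hWb := hW t i _ hbφ hlφ
        rw [integral_mul_const, integral_mul_const] at hWb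
        set A := ∫ x, |h t x - g x| ∂(D t) with hA
        set B := ∫ x, |h t x - g x| ∂(D i) with hB
        have habs : |B - A| * c ≤ What t i + γ t i := by
          rw [← abs_of_pos hc0, ← abs_mul, sub_mul]
          exact hWb
        have hmul := mul_le_mul_of_nonneg_left habs h2K.le
        have heq : 2*K*(|B - A| * c) = |B - A| := by rw [hc]; field_simp
        rw [heq] at hmul
        have hfin : A - B ≤ 2*K*(What t i + γ t i) :=
          le_trans (le_trans (le_abs_self _) (le_of_eq (abs_sub_comm A B))) hmul
        show A ≤ B + 2*K*(What t i + γ t i)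
        linarith
      linarith
    have hinf : expLoss (D t) (h t) (f t)
        - (expLoss (D i) (h t) (f i) + 2*K*(What t i + γ t i)) ≤
        ⨅ g : H, (expLoss (D t) (g : X → ℝ) (f t) + expLoss (D i) (g : X → ℝ) (f i)) :=
      le_ciInf fun g => by have := hkey g; linarith
    linarith
  -- per-task inequality
  have keyt : ∀ t : Fin T, expLoss (D t) (h t) (f t) ≤
      Ehat t + ε t + 2*K*(∑ i, α t i * (What t i + γ t i))
      + ∑ i, α t i * (⨅ g : H, (expLoss (D t) (g : X → ℝ) (f t)
          + expLoss (D i) (g : X → ℝ) (f i))) := by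
    intro t
    have h1 : expLoss (D t) (h t) (f t) = ∑ i, α t i * expLoss (D t) (h t) (f t) := by
      rw [← Finset.sum_mul, hα1, one_mul]
    rw [h1]
    have h2 : ∑ i, α t i * expLoss (D t) (h t) (f t) ≤
        ∑ i, α t i * (expLoss (D i) (h t) (f i) + 2*K*(What t i + γ t i)
          + ⨅ g : H, (expLoss (D t) (g : X → ℝ) (f t) + expLoss (D i) (g : X → ℝ) (f i))) :=
      Finset.sum_le_sum fun i _ => mul_le_mul_of_nonneg_left (key t i) (hα0 t i)
    refine h2.trans ?_
    have e1 : ∑ i, α t i * (expLoss (D i) (h t) (f i) + 2*K*(What t i + γ t i)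
          + ⨅ g : H, (expLoss (D t) (g : X → ℝ) (f t) + expLoss (D i) (g : X → ℝ) (f i)))
        = (∑ i, α t i * expLoss (D i) (h t) (f i))
          + 2*K*(∑ i, α t i * (What t i + γ t i))
          + ∑ i, α t i * (⨅ g : H, (expLoss (D t) (g : X → ℝ) (f t)
              + expLoss (D i) (g : X → ℝ) (f i))) := by
      rw [Finset.mul_sum, ← Finset.sum_add_distrib, ← Finset.sum_add_distrib]
      exact Finset.sum_congr rfl fun i _ => by ring
    rw [e1]
    have := hemp t
    linarith
  calc ∑ t, lam t * expLoss (D t) (h t) (f t)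
      ≤ ∑ t, lam t * (Ehat t + ε t + 2*K*(∑ i, α t i * (What t i + γ t i))
          + ∑ i, α t i * (⨅ g : H, (expLoss (D t) (g : X → ℝ) (f t)
              + expLoss (D i) (g : X → ℝ) (f i)))) :=
        Finset.sum_le_sum fun t _ => mul_le_mul_of_nonneg_left (keyt t) (hlam0 t)
    _ = _ := by
        have e2 : ∀ t : Fin T, lam t * (Ehat t + ε t + 2*K*(∑ i, α t i * (What t i + γ t i))
              + ∑ i, α t i * (⨅ g : H, (expLoss (D t) (g : X → ℝ) (f t)
                  + expLoss (D i) (g : X → ℝ) (f i))))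
            = lam t * Ehat t + lam t * ε t
              + 2*K*(lam t * ∑ i, α t i * (What t i + γ t i))
              + lam t * ∑ i, α t i * (⨅ g : H, (expLoss (D t) (g : X → ℝ) (f t)
                  + expLoss (D i) (g : X → ℝ) (f i))) := fun t => by ring
        rw [Finset.sum_congr rfl fun t _ => e2 t, Finset.sum_add_distrib,
          Finset.sum_add_distrib, Finset.sum_add_distrib, ← Finset.mul_sum]
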